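/- arXiv:2601.19845 — 6 statements merged into one kernel-verified Lean document; each statement's English description precedes it below -/
import Mathlib

section
/- For every nonnegative integer m, the sum over i from 0 to m of q^i · (q;q²)_i (q;q²)_{m-i} / ((q²;q²)_i (q²;q²)_{m-i}) equals 1, as an identity of rational functions (equivalently, of formal power series) in q. -/
/-!
With `r_n = (q;q²)_n / (q²;q²)_n` (`qPochRatio`), the summand `F m i = q^i r_i r_{m-i}` (`wzTerm`)
has a Wilf–Zeilberger partner `G m i = R m i * F m i` (`wzCert`), where
`R m i = -q^{2(m-i)} (1 - q^{2i}) / (1 - q^{2m})`: for `i ≤ m`,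
`F (m+1) i - F m i = G (m+1) (i+1) - G (m+1) i`. Summing over `i ≤ m` telescopes, and since
`G m 0 = 0` and `G m m = -F m m`, the sum `∑_{i ≤ m} F m i` does not depend on `m`; at `m = 0`
it is `1`.
-/

open Finset

/-- `(q^a; q^2)_n = ∏_{k<n} (1 - q^(a+2k))` as a rational function in `q`. -/
noncomputable def qPoch2 (a n : ℕ) : RatFunc ℚ :=
  ∏ k ∈ Finset.range n, (1 - (RatFunc.X : RatFunc ℚ) ^ (a + 2 * k))

open RatFunc

theorem RatFunc.one_sub_X_pow_ne_zero {K : Type*} [Field K] {k : ℕ} (hk : k ≠ 0) :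
    (1 : RatFunc K) - X ^ k ≠ 0 := by
  have hp : (1 : Polynomial K) - Polynomial.X ^ k ≠ 0 := by
    rw [← neg_sub, neg_ne_zero, ← Polynomial.C_1]
    exact Polynomial.X_pow_sub_C_ne_zero (Nat.pos_of_ne_zero hk) 1
  simpa [← algebraMap_X] using algebraMap_ne_zero hp

lemma qPoch2_ne_zero {a : ℕ} (ha : a ≠ 0) (n : ℕ) : qPoch2 a n ≠ 0 :=
  prod_ne_zero_iff.mpr fun _ _ => one_sub_X_pow_ne_zero (by omega)

lemma qPoch2_succ (a n : ℕ) : qPoch2 a (n + 1) = qPoch2 a n * (1 - X ^ (a + 2 * n)) :=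
  prod_range_succ _ _

noncomputable def qPochRatio (n : ℕ) : RatFunc ℚ := qPoch2 1 n / qPoch2 2 n

lemma qPochRatio_zero : qPochRatio 0 = 1 := by
  simp [qPochRatio, qPoch2]

lemma qPochRatio_succ (n : ℕ) :
    qPochRatio (n + 1) = qPochRatio n * (1 - X ^ (1 + 2 * n)) / (1 - X ^ (2 + 2 * n)) := by
  rw [qPochRatio, qPochRatio, qPoch2_succ, qPoch2_succ, mul_div_mul_comm, mul_div_assoc]

noncomputable def wzTerm (m i : ℕ) : RatFunc ℚ := X ^ i * qPochRatio i * qPochRatio (m - i)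

noncomputable def wzCert (m i : ℕ) : RatFunc ℚ :=
  -(wzTerm m i * X ^ (2 * (m - i)) * (1 - X ^ (2 * i))) / (1 - X ^ (2 * m))

lemma wzCert_zero (m : ℕ) : wzCert m 0 = 0 := by
  simp [wzCert]

lemma wzCert_self {m : ℕ} (hm : m ≠ 0) : wzCert m m = -wzTerm m m := by
  rw [wzCert, Nat.sub_self, mul_zero, pow_zero, mul_one, neg_div, mul_div_assoc,
    div_self (one_sub_X_pow_ne_zero (by omega)), mul_one]

lemma wzTerm_succ_sub {m i : ℕ} (hi : i ≤ m) :
    wzTerm (m + 1) i - wzTerm m i = wzCert (m + 1) (i + 1) - wzCert (m + 1) i := by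
  obtain ⟨n, rfl⟩ := Nat.exists_eq_add_of_le' hi
  have hn : n + i + 1 - i = n + 1 := by omega
  have hn' : n + i + 1 - (i + 1) = n := by omega
  simp only [wzCert, wzTerm, hn, hn', Nat.add_sub_cancel, qPochRatio_succ]
  have h₁ : (1 : RatFunc ℚ) - X ^ (2 + 2 * n) ≠ 0 := one_sub_X_pow_ne_zero (by omega)
  have h₂ : (1 : RatFunc ℚ) - X ^ (2 + 2 * i) ≠ 0 := one_sub_X_pow_ne_zero (by omega)
  have h₃ : (1 : RatFunc ℚ) - X ^ (2 * (n + i + 1)) ≠ 0 := one_sub_X_pow_ne_zero (by omega)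
  have hX : (X : RatFunc ℚ) ^ (2 * (n + i + 1)) = X ^ (2 * n) * X ^ (2 * i) * X ^ 2 := by
    ring
  rw [hX] at h₃ ⊢
  field_simp
  ring

lemma sum_wzTerm_succ (m : ℕ) :
    ∑ i ∈ range (m + 2), wzTerm (m + 1) i = ∑ i ∈ range (m + 1), wzTerm m i := by
  have htel : ∑ i ∈ range (m + 1), (wzTerm (m + 1) i - wzTerm m i) = wzCert (m + 1) (m + 1) := by
    rw [sum_congr rfl fun i hi => wzTerm_succ_sub (Nat.lt_succ_iff.mp (mem_range.mp hi)),
      sum_range_sub, wzCert_zero, sub_zero]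
  rw [sum_sub_distrib, sub_eq_iff_eq_add'] at htel
  rw [sum_range_succ, htel, wzCert_self m.succ_ne_zero]
  ring

lemma sum_wzTerm (m : ℕ) : ∑ i ∈ range (m + 1), wzTerm m i = 1 := by
  induction m with
  | zero => simp [wzTerm, qPochRatio_zero]
  | succ m ih => rw [sum_wzTerm_succ, ih]

/-- For every nonnegative integer `m`,
`∑_{i=0}^m q^i (q;q²)_i (q;q²)_{m-i} / ((q²;q²)_i (q²;q²)_{m-i}) = 1`
as rational functions in `q`. -/
theorem stmt_0 (m : ℕ) :
    ∑ i ∈ Finset.range (m + 1),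
      (RatFunc.X : RatFunc ℚ) ^ i * qPoch2 1 i * qPoch2 1 (m - i) /
        (qPoch2 2 i * qPoch2 2 (m - i)) = 1 := by
  rw [← sum_wzTerm m]
  refine sum_congr rfl fun i _ => ?_
  rw [wzTerm, qPochRatio, qPochRatio]
  ring
end

section
/- For every nonnegative integer m and parameters a, c (with the relevant denominators nonzero), the identity ∑_{n=0}^{m} (a;q)_n (q^{-m};q)_n q^n / ((q;q)_n (c;q)_n) = a^m (c/a;q)_m / (c;q)_m holds (the second Chu–Vandermonde sum). -/
/-!
Put `b = q⁻ᵐ` and let `t_b(n) = (a;q)_n (b;q)_n qⁿ / ((q;q)_n (c;q)_n)`. For a free parameter `b`,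
`(b - c) t_{b/q}(n+1) - (ab - c) t_b(n+1) = b (G(n+1) - G(n))` with
`G(n) = (a;q)_{n+1} (b;q)_n / ((q;q)_n (c;q)_n)`. Summing over `n` telescopes, and for `b = q⁻ᵐ` the
boundary term `G(m+1)` vanishes because `(q⁻ᵐ;q)_{m+1} = 0`. Hence the sums `S_m` satisfy
`(1 - c qᵐ) S_{m+1} = (a - c qᵐ) S_m`, which is also the recurrence of `aᵐ (c/a;q)_m / (c;q)_m`.
-/

open Finset

section CommRing

variable {R : Type*} [CommRing R]

def qPochhammer (A q : R) (n : ℕ) : R := ∏ k ∈ range n, (1 - A * q ^ k)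

theorem qPochhammer_zero (A q : R) : qPochhammer A q 0 = 1 := prod_range_zero _

theorem qPochhammer_succ (A q : R) (n : ℕ) :
    qPochhammer A q (n + 1) = qPochhammer A q n * (1 - A * q ^ n) :=
  prod_range_succ _ n

theorem qPochhammer_self (q : R) (n : ℕ) :
    qPochhammer q q n = ∏ k ∈ range n, (1 - q ^ (k + 1)) := by
  simp only [qPochhammer, pow_succ']

theorem qPochhammer_ne_zero_of_le {A q : R} {m n : ℕ} (h : m ≤ n) (hn : qPochhammer A q n ≠ 0) :
    qPochhammer A q m ≠ 0 := by
  obtain ⟨k, rfl⟩ := Nat.exists_eq_add_of_le h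
  rw [qPochhammer, prod_range_add] at hn
  exact left_ne_zero_of_mul hn

end CommRing

section Field

variable {F : Type*} [Field F]

theorem qPochhammer_div_succ {q : F} (hq : q ≠ 0) (A : F) (n : ℕ) :
    qPochhammer (A / q) q (n + 1) = (1 - A / q) * qPochhammer A q n := by
  rw [qPochhammer, prod_range_succ', pow_zero, mul_one, mul_comm]
  congr 1
  refine prod_congr rfl fun k _ => ?_
  rw [pow_succ', ← mul_assoc, div_mul_cancel₀ A hq]

theorem qPochhammer_inv_pow_eq_zero {q : F} (hq : q ≠ 0) {m n : ℕ} (h : m < n) :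
    qPochhammer (q ^ m)⁻¹ q n = 0 :=
  prod_eq_zero (mem_range.mpr h) (by rw [inv_mul_cancel₀ (pow_ne_zero m hq), sub_self])

def chuTerm (q a b c : F) (n : ℕ) : F :=
  qPochhammer a q n * qPochhammer b q n * q ^ n / (qPochhammer q q n * qPochhammer c q n)

def chuAntidiff (q a b c : F) (n : ℕ) : F :=
  qPochhammer a q (n + 1) * qPochhammer b q n / (qPochhammer q q n * qPochhammer c q n)

theorem chuTerm_contiguous {q : F} (hq : q ≠ 0) (a b c : F) {n : ℕ}
    (hqq : qPochhammer q q (n + 1) ≠ 0) (hc : qPochhammer c q (n + 1) ≠ 0) :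
    (b - c) * chuTerm q a (b / q) c (n + 1) - (a * b - c) * chuTerm q a b c (n + 1)
      = b * (chuAntidiff q a b c (n + 1) - chuAntidiff q a b c n) := by
  rw [qPochhammer_succ, mul_ne_zero_iff, mul_comm q] at hqq
  rw [qPochhammer_succ, mul_ne_zero_iff] at hc
  obtain ⟨hqq, hqn⟩ := hqq
  obtain ⟨hc, hcn⟩ := hc
  simp only [chuTerm, chuAntidiff, qPochhammer_div_succ hq, qPochhammer_succ, pow_succ]
  generalize q ^ n = x at *
  field_simp
  ring

theorem sum_chuTerm_contiguous {q : F} (hq : q ≠ 0) (a b c : F) {N : ℕ}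
    (hqq : qPochhammer q q N ≠ 0) (hc : qPochhammer c q N ≠ 0) :
    ∑ n ∈ range (N + 1), ((b - c) * chuTerm q a (b / q) c n - (a * b - c) * chuTerm q a b c n)
      = b * chuAntidiff q a b c N := by
  have hstep : ∀ n ∈ range N,
      (b - c) * chuTerm q a (b / q) c (n + 1) - (a * b - c) * chuTerm q a b c (n + 1)
        = b * (chuAntidiff q a b c (n + 1) - chuAntidiff q a b c n) := fun n hn =>
    chuTerm_contiguous hq a b c (qPochhammer_ne_zero_of_le (mem_range.mp hn) hqq)
      (qPochhammer_ne_zero_of_le (mem_range.mp hn) hc)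
  rw [sum_range_succ', sum_congr rfl hstep, ← mul_sum, sum_range_sub]
  simp only [chuTerm, chuAntidiff, qPochhammer_zero, zero_add, qPochhammer_succ]
  ring

theorem inv_pow_div_eq_inv_pow_succ {q : F} (m : ℕ) : (q ^ m)⁻¹ / q = (q ^ (m + 1))⁻¹ := by
  rw [pow_succ, mul_inv, div_eq_mul_inv]

theorem sum_chuTerm_succ {q : F} (hq : q ≠ 0) (a c : F) {m : ℕ}
    (hqq : qPochhammer q q (m + 1) ≠ 0) (hc : qPochhammer c q (m + 1) ≠ 0) :
    ((q ^ m)⁻¹ - c) * ∑ n ∈ range (m + 2), chuTerm q a (q ^ (m + 1))⁻¹ c n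
      = (a * (q ^ m)⁻¹ - c) * ∑ n ∈ range (m + 1), chuTerm q a (q ^ m)⁻¹ c n := by
  have hvanish := qPochhammer_inv_pow_eq_zero hq (Nat.lt_add_one m)
  have key := sum_chuTerm_contiguous hq a (q ^ m)⁻¹ c hqq hc
  rwa [chuAntidiff, hvanish, mul_zero, zero_div, mul_zero, sum_sub_distrib, ← mul_sum,
    ← mul_sum, sub_eq_zero, sum_range_succ (chuTerm q a (q ^ m)⁻¹ c) (m + 1), chuTerm, hvanish,
    mul_zero, zero_mul, zero_div, add_zero, inv_pow_div_eq_inv_pow_succ] at key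

theorem sum_chuTerm {q a c : F} (hq : q ≠ 0) (ha : a ≠ 0) {m : ℕ}
    (hqq : qPochhammer q q m ≠ 0) (hc : qPochhammer c q m ≠ 0) :
    ∑ n ∈ range (m + 1), chuTerm q a (q ^ m)⁻¹ c n
      = a ^ m * qPochhammer (c / a) q m / qPochhammer c q m := by
  induction m with
  | zero => simp [chuTerm, qPochhammer_zero]
  | succ m ih =>
    have hqm : q ^ m ≠ 0 := pow_ne_zero m hq
    have hcm : qPochhammer c q m ≠ 0 := qPochhammer_ne_zero_of_le m.le_succ hc
    have hcqm : 1 - q ^ m * c ≠ 0 :=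
      mul_comm c (q ^ m) ▸ right_ne_zero_of_mul (qPochhammer_succ c q m ▸ hc)
    have hbc : (q ^ m)⁻¹ - c ≠ 0 := by
      rw [show (q ^ m)⁻¹ - c = (1 - q ^ m * c) / q ^ m by field_simp]
      exact div_ne_zero hcqm hqm
    apply mul_left_cancel₀ hbc
    rw [sum_chuTerm_succ hq a c hqq hc, ih (qPochhammer_ne_zero_of_le m.le_succ hqq) hcm,
      qPochhammer_succ, qPochhammer_succ, pow_succ]
    field_simp

end Field

/-- The second Chu–Vandermonde sum:
`∑_{n=0}^{m} (a;q)_n (q^{-m};q)_n q^n / ((q;q)_n (c;q)_n) = a^m (c/a;q)_m / (c;q)_m`,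
for elements of a field with the relevant denominators nonzero. -/
theorem stmt_2 {F : Type*} [Field F] (q a c : F) (m : ℕ)
    (hq : q ≠ 0) (ha : a ≠ 0)
    (hqq : ∀ n ≤ m, ∏ k ∈ Finset.range n, (1 - q ^ (k + 1)) ≠ 0)
    (hc : ∀ n ≤ m, ∏ k ∈ Finset.range n, (1 - c * q ^ k) ≠ 0) :
    ∑ n ∈ Finset.range (m + 1),
      (∏ k ∈ Finset.range n, (1 - a * q ^ k)) *
        (∏ k ∈ Finset.range n, (1 - (q ^ m)⁻¹ * q ^ k)) * q ^ n /
        ((∏ k ∈ Finset.range n, (1 - q ^ (k + 1))) *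
          ∏ k ∈ Finset.range n, (1 - c * q ^ k))
      = a ^ m * (∏ k ∈ Finset.range m, (1 - c / a * q ^ k)) /
          ∏ k ∈ Finset.range m, (1 - c * q ^ k) := by
  simp only [← qPochhammer_self]
  exact sum_chuTerm hq ha (qPochhammer_self q m ▸ hqq m le_rfl) (hc m le_rfl)
end

section
/- For every positive integer n, the formal power series (q²;q²)_n / (q;q²)_n² in ℤ[[q]] (or ℝ[[q]]) has all coefficients strictly positive. -/
open Finset PowerSeries

/-- `(q^a; q^2)_n = ∏_{j<n} (1 - q^(a+2j))` as a formal power series in `q`. -/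
noncomputable def P2 (a n : ℕ) : PowerSeries ℚ :=
  ∏ j ∈ Finset.range n, (1 - (PowerSeries.X : PowerSeries ℚ) ^ (a + 2 * j))

/-!
The numerator factors `1 - q^(2j)` are absorbed into the denominator one at a time, in increasing
order of `j`. For odd `j`, `(1 - q^(2j)) / (1 - q^j) = 1 + q^j`. For even `j`, write `2j = a + b`
with `a, b` odd: since `1 - q^(a+b) = (1 - q^a) + q^a (1 - q^b)`, the series splits into two,
each of which has lost one of the denominators `1 - q^a`, `1 - q^b`. Taking `a, b = j ± (2k+1)`,
where the parameter `k` then moves to `k ± 1`, the denominators left over depend only on `j` and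
`k`, so induction shows that every series met along the way has nonnegative coefficients. On the
branch that always keeps the smaller exponent, the factor `1 / (1 - q)` is never used up, and
`1 / (1 - q)` times a nonnegative series with constant term `1` has positive coefficients.
-/

namespace PowerSeries

section Order

variable {R : Type*} [Semiring R] [PartialOrder R]

def CoeffNonneg (f : R⟦X⟧) : Prop := ∀ m, 0 ≤ coeff m f

def CoeffPos (f : R⟦X⟧) : Prop := ∀ m, 0 < coeff m f

variable [IsOrderedRing R] {f g : R⟦X⟧}

theorem CoeffNonneg.add (hf : CoeffNonneg f) (hg : CoeffNonneg g) : CoeffNonneg (f + g) :=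
  fun m => by rw [map_add]; exact add_nonneg (hf m) (hg m)

theorem CoeffNonneg.mul (hf : CoeffNonneg f) (hg : CoeffNonneg g) : CoeffNonneg (f * g) :=
  fun m => by rw [coeff_mul]; exact sum_nonneg fun p _ => mul_nonneg (hf p.1) (hg p.2)

theorem coeffNonneg_one : CoeffNonneg (1 : R⟦X⟧) :=
  fun m => by rw [coeff_one]; split_ifs <;> simp

theorem coeffNonneg_X_pow (a : ℕ) : CoeffNonneg (X ^ a : R⟦X⟧) :=
  fun m => by rw [coeff_X_pow]; split_ifs <;> simp

theorem coeffNonneg_mk_one : CoeffNonneg (mk 1 : R⟦X⟧) :=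
  fun m => by simp

theorem CoeffNonneg.pow (hf : CoeffNonneg f) (k : ℕ) : CoeffNonneg (f ^ k) := by
  induction k with
  | zero => simpa using coeffNonneg_one
  | succ k ih => simpa [pow_succ] using ih.mul hf

theorem CoeffNonneg.one_add_X_pow_mul (a : ℕ) (hf : CoeffNonneg f) :
    CoeffNonneg ((1 + X ^ a) * f) :=
  (coeffNonneg_one.add (coeffNonneg_X_pow a)).mul hf

theorem CoeffPos.add_coeffNonneg (hf : CoeffPos f) (hg : CoeffNonneg g) : CoeffPos (f + g) :=
  fun m => by rw [map_add]; exact add_pos_of_pos_of_nonneg (hf m) (hg m)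

theorem CoeffPos.one_add_X_pow_mul (a : ℕ) (hf : CoeffPos f) : CoeffPos ((1 + X ^ a) * f) := by
  rw [add_mul, one_mul]
  exact hf.add_coeffNonneg ((coeffNonneg_X_pow a).mul fun m => (hf m).le)

theorem coeffPos_mk_one_mul [Nontrivial R] (hg : CoeffNonneg g) (hg0 : constantCoeff g = 1) :
    CoeffPos (mk 1 * g) := fun m => by
  rw [coeff_mul]
  calc (0 : R) < 1 := zero_lt_one
    _ = coeff m (mk 1) * coeff 0 g := by simp [hg0]
    _ ≤ _ := single_le_sum (f := fun p : ℕ × ℕ => coeff p.1 (mk 1) * coeff p.2 g)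
        (fun p _ => mul_nonneg (coeffNonneg_mk_one p.1) (hg p.2))
        (a := (m, 0)) (mem_antidiagonal.mpr (add_zero m))

end Order

theorem CoeffNonneg.expand {R : Type*} [CommRing R] [PartialOrder R] {f : R⟦X⟧}
    (hf : CoeffNonneg f) (p : ℕ) (hp : p ≠ 0) : CoeffNonneg (expand p hp f) :=
  fun m => by rw [coeff_expand]; split_ifs; exacts [hf _, le_rfl]

section Geometric

variable {R : Type*} [CommRing R]

theorem one_sub_X_pow_mul_expand_mk_one (a : ℕ) (ha : a ≠ 0) :
    (1 - X ^ a) * expand a ha (mk 1 : R⟦X⟧) = 1 := by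
  have := congrArg (expand a ha) (mk_one_mul_one_sub_eq_one (S := R))
  rwa [map_mul, map_sub, map_one, expand_X, mul_comm] at this

theorem one_sub_X_pow_two_mul_mul {a : ℕ} (ha : a ≠ 0) {D D₁ : R⟦X⟧}
    (hD : D = expand a ha (mk 1) * D₁) : (1 - X ^ (2 * a)) * D = (1 + X ^ a) * D₁ := by
  linear_combination (1 + X ^ a) * D₁ * one_sub_X_pow_mul_expand_mk_one (R := R) a ha +
    (1 - X ^ (2 * a)) * hD

theorem one_sub_X_pow_add_mul {a b : ℕ} (ha : a ≠ 0) (hb : b ≠ 0) {D D₁ D₂ : R⟦X⟧}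
    (h₁ : D = expand a ha (mk 1) * D₁) (h₂ : D = expand b hb (mk 1) * D₂) :
    (1 - X ^ (a + b)) * D = D₁ + X ^ a * D₂ := by
  linear_combination (1 - X ^ a) * h₁ + X ^ a * (1 - X ^ b) * h₂ +
    D₁ * one_sub_X_pow_mul_expand_mk_one (R := R) a ha +
    X ^ a * D₂ * one_sub_X_pow_mul_expand_mk_one (R := R) b hb

end Geometric

end PowerSeries

namespace PochhammerQuotient

section Ring

variable {R : Type*} [CommRing R]

/-- The multiplicity of `1 / (1 - q^(2i+1))` once `1 - q^(2j)` has been absorbed for all `j ≤ 2u`,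
with parameter `k`: two copies of each exponent `2u + t` with `t > 0`, except that for
`t ∈ {2k - 1, 2k - 5, 2k - 9, …}` one copy of `2u + t` has been replaced by `2u - t`. -/
def stageMult (u k i : ℕ) : ℕ :=
  if i < u then (if u ≤ i + k ∧ (i + u + k) % 2 = 0 then 1 else 0)
  else 2 - (if i < u + k ∧ (i + u + k) % 2 = 1 then 1 else 0)

theorem stageMult_eq_high (u k : ℕ) :
    stageMult u k = Pi.single u 1 + (Pi.single (u + k + 1) 1 + stageMult (u + 1) (k + 1)) := by
  funext i
  simp only [stageMult, Pi.add_apply, Pi.single_apply]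
  split_ifs <;> omega

theorem stageMult_eq_low {u k : ℕ} (hk : k ≤ u) :
    stageMult u k = Pi.single u 1 + (Pi.single (u - k) 1 + stageMult (u + 1) (k - 1)) := by
  funext i
  simp only [stageMult, Pi.add_apply, Pi.single_apply]
  split_ifs <;> omega

theorem stageMult_self_zero_pos (u : ℕ) : 0 < stageMult u u 0 := by
  unfold stageMult
  split_ifs <;> omega

noncomputable def oddDenom (n : ℕ) (c : ℕ → ℕ) : R⟦X⟧ :=
  ∏ i ∈ range n, expand (2 * i + 1) (Nat.succ_ne_zero _) (mk 1) ^ c i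

theorem oddDenom_single_add {n a : ℕ} (ha : a < n) (c : ℕ → ℕ) :
    oddDenom n (Pi.single a 1 + c) =
      expand (2 * a + 1) (Nat.succ_ne_zero _) (mk 1) * (oddDenom n c : R⟦X⟧) := by
  simp only [oddDenom, Pi.add_apply, pow_add, prod_mul_distrib]
  rw [prod_eq_single_of_mem a (mem_range.2 ha) fun i _ hi => by simp [hi]]
  simp

theorem constantCoeff_oddDenom (n : ℕ) (c : ℕ → ℕ) : constantCoeff (oddDenom n c : R⟦X⟧) = 1 := by
  simp [oddDenom]

noncomputable def evenNumer (n j : ℕ) : R⟦X⟧ :=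
  ∏ i ∈ Ico j (n + 1), (1 - X ^ (2 * i))

noncomputable def stage (n u k : ℕ) : R⟦X⟧ :=
  evenNumer n (2 * u + 1) * oddDenom n (stageMult u k)

theorem stage_eq_of_two_mul_add_two_le {n u k : ℕ} (hn : 2 * u + 2 ≤ n) (hk : k ≤ u) :
    (stage n u k : R⟦X⟧) = (1 + X ^ (2 * u + 1)) *
      (stage n (u + 1) (k + 1) + X ^ (2 * (u + k + 1) + 1) * stage n (u + 1) (k - 1)) := by
  set c := Pi.single (u + k + 1) 1 + stageMult (u + 1) (k + 1)
  have hc : stageMult u k = Pi.single u 1 + c := stageMult_eq_high u k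
  have hc' : c = Pi.single (u - k) 1 + stageMult (u + 1) (k - 1) :=
    add_left_cancel (hc.symm.trans (stageMult_eq_low hk))
  have hodd : (1 - X ^ (2 * (2 * u + 1))) * (oddDenom n (stageMult u k) : R⟦X⟧) =
      (1 + X ^ (2 * u + 1)) * oddDenom n c :=
    one_sub_X_pow_two_mul_mul _ (by rw [hc, oddDenom_single_add (by omega)])
  have hpair : (1 - X ^ (2 * (2 * u + 2))) * (oddDenom n c : R⟦X⟧) =
      oddDenom n (stageMult (u + 1) (k + 1)) +
        X ^ (2 * (u + k + 1) + 1) * oddDenom n (stageMult (u + 1) (k - 1)) := by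
    rw [show 2 * (2 * u + 2) = (2 * (u + k + 1) + 1) + (2 * (u - k) + 1) by omega]
    exact one_sub_X_pow_add_mul _ _ (oddDenom_single_add (by omega) _)
      (by rw [hc', oddDenom_single_add (by omega)])
  have hnumer : (evenNumer n (2 * u + 1) : R⟦X⟧) = (1 - X ^ (2 * (2 * u + 1))) *
      ((1 - X ^ (2 * (2 * u + 2))) * evenNumer n (2 * (u + 1) + 1)) := by
    rw [evenNumer, prod_eq_prod_Ico_succ_bot (by omega), prod_eq_prod_Ico_succ_bot (by omega)]
    rfl
  rw [stage, stage, stage, hnumer]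
  linear_combination ((1 - X ^ (2 * (2 * u + 2))) * evenNumer n (2 * (u + 1) + 1)) * hodd +
    ((1 + X ^ (2 * u + 1)) * evenNumer n (2 * (u + 1) + 1)) * hpair

theorem stage_of_eq_two_mul {n u : ℕ} (hn : n = 2 * u) (k : ℕ) :
    (stage n u k : R⟦X⟧) = oddDenom n (stageMult u k) := by
  rw [stage, evenNumer, Ico_eq_empty_of_le (by omega), prod_empty, one_mul]

theorem stage_of_eq_two_mul_add_one {n u : ℕ} (hn : n = 2 * u + 1) (k : ℕ) :
    (stage n u k : R⟦X⟧) = (1 + X ^ (2 * u + 1)) *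
      oddDenom n (Pi.single (u + k + 1) 1 + stageMult (u + 1) (k + 1)) := by
  rw [stage, evenNumer, prod_eq_prod_Ico_succ_bot (by omega), Ico_eq_empty_of_le (by omega),
    prod_empty, mul_one]
  exact one_sub_X_pow_two_mul_mul _ (by rw [stageMult_eq_high, oddDenom_single_add (by omega)])

end Ring

section Order

variable {R : Type*} [CommRing R] [PartialOrder R] [IsOrderedRing R]

theorem coeffNonneg_oddDenom (n : ℕ) (c : ℕ → ℕ) : CoeffNonneg (oddDenom n c : R⟦X⟧) :=
  prod_induction _ _ (fun _ _ => CoeffNonneg.mul) coeffNonneg_one fun _ _ =>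
    (coeffNonneg_mk_one.expand _ _).pow _

theorem coeffPos_oddDenom [Nontrivial R] {n : ℕ} (hn : 0 < n) {c : ℕ → ℕ} (hc : 0 < c 0) :
    CoeffPos (oddDenom n c : R⟦X⟧) := by
  have hc : c = Pi.single 0 1 + (c - Pi.single 0 1) := by
    funext i
    rcases eq_or_ne i 0 with rfl | hi
    · simp only [Pi.add_apply, Pi.sub_apply, Pi.single_eq_same]
      omega
    · simp [hi]
  rw [hc, oddDenom_single_add hn]
  simpa using coeffPos_mk_one_mul (coeffNonneg_oddDenom n _) (constantCoeff_oddDenom n _)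

variable {n : ℕ}

theorem coeffNonneg_stage : ∀ m u k, n = 2 * u + m → k ≤ u → CoeffNonneg (stage n u k : R⟦X⟧)
  | 0, u, k, h, _ => by
    rw [stage_of_eq_two_mul h]
    exact coeffNonneg_oddDenom n _
  | 1, u, k, h, _ => by
    rw [stage_of_eq_two_mul_add_one h]
    exact (coeffNonneg_oddDenom n _).one_add_X_pow_mul _
  | m + 2, u, k, h, hk => by
    rw [stage_eq_of_two_mul_add_two_le (by omega) hk]
    exact ((coeffNonneg_stage m (u + 1) (k + 1) (by omega) (by omega)).add
      ((coeffNonneg_X_pow _).mul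
        (coeffNonneg_stage m (u + 1) (k - 1) (by omega) (by omega)))).one_add_X_pow_mul _

theorem coeffPos_stage_self [Nontrivial R] (hn : 0 < n) :
    ∀ m u, n = 2 * u + m → CoeffPos (stage n u u : R⟦X⟧)
  | 0, u, h => by
    rw [stage_of_eq_two_mul h]
    exact coeffPos_oddDenom hn (stageMult_self_zero_pos u)
  | 1, u, h => by
    rw [stage_of_eq_two_mul_add_one h]
    exact (coeffPos_oddDenom hn
      ((stageMult_self_zero_pos _).trans_le (Nat.le_add_left _ _))).one_add_X_pow_mul _
  | m + 2, u, h => by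
    rw [stage_eq_of_two_mul_add_two_le (by omega) le_rfl]
    exact ((coeffPos_stage_self hn m (u + 1) (by omega)).add_coeffNonneg
      ((coeffNonneg_X_pow _).mul
        (coeffNonneg_stage m (u + 1) (u - 1) (by omega) (by omega)))).one_add_X_pow_mul _

end Order

theorem stage_zero_zero (n : ℕ) : stage n 0 0 = P2 2 n * (P2 1 n ^ 2)⁻¹ := by
  have hnumer : evenNumer n 1 = P2 2 n := by
    rw [evenNumer, P2, prod_Ico_eq_prod_range, Nat.add_sub_cancel]
    exact prod_congr rfl fun j _ => by ring_nf
  have hdenom : oddDenom n (stageMult 0 0) * P2 1 n ^ 2 = 1 := by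
    have hmult : stageMult 0 0 = fun _ => 2 := by
      funext i
      simp [stageMult]
    simp only [oddDenom, hmult, P2, ← prod_pow, ← prod_mul_distrib]
    refine prod_eq_one fun i _ => ?_
    rw [← mul_pow, add_comm 1, mul_comm, one_sub_X_pow_mul_expand_mk_one]
    simp
  have hconst : constantCoeff (P2 1 n ^ 2) ≠ 0 := by
    have := congrArg constantCoeff hdenom
    rw [map_mul, constantCoeff_oddDenom, one_mul, map_one] at this
    simp [this]
  rw [stage, hnumer, (eq_inv_iff_mul_eq_one hconst).mpr hdenom]

end PochhammerQuotient

/-- For every positive integer `n`, the formal power series `(q²;q²)_n / (q;q²)_n²`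
has all coefficients strictly positive. -/
theorem stmt_3 (n : ℕ) (hn : 0 < n) :
    ∀ m : ℕ, 0 < PowerSeries.coeff (R := ℚ) m (P2 2 n * (P2 1 n ^ 2)⁻¹) := by
  rw [← PochhammerQuotient.stage_zero_zero]
  exact PochhammerQuotient.coeffPos_stage_self hn n 0 (by omega)
end

section
/- For every positive integer n, the identity (q²;q²)_n / (q;q²)_n² = ∑_{i=0}^{n} [n choose i]_{q²} · q^i / ((q^{2i+1};q²)_{n-i} (q^{2(n-i)+1};q²)_i) holds as formal power series in q. -/
open Finset PowerSeries

/-!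
Since `(q;q²)_n = (q;q²)_i (q^{2i+1};q²)_{n-i} = (q;q²)_{n-i} (q^{2(n-i)+1};q²)_i`,
multiplying by `(q;q²)_n²` turns the identity into the polynomial identity
`∑_{i+j=n} [i+j choose i]_{q²} q^i (q;q²)_i (q;q²)_j = (q²;q²)_n`,
valid in every commutative ring. It follows by induction on `n` from the `q`-Pascal rule,
because `(1 - q^{2j+1}) + q^{2j+1} (1 - q^{2i+1}) = 1 - q^{2(i+j+1)}`.
-/

namespace Finset.Nat

theorem sum_antidiagonal_succ_of_pascal {M : Type*} [AddCommMonoid M] {f g h : ℕ → ℕ → M}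
    (h_zero_left : ∀ j, h 0 (j + 1) = f 0 j) (h_zero_right : ∀ i, h (i + 1) 0 = g i 0)
    (h_succ : ∀ i j, h (i + 1) (j + 1) = f (i + 1) j + g i (j + 1)) (n : ℕ) :
    ∑ p ∈ antidiagonal (n + 1), h p.1 p.2
      = ∑ p ∈ antidiagonal n, f p.1 p.2 + ∑ p ∈ antidiagonal n, g p.1 p.2 := by
  cases n with
  | zero => simp [sum_antidiagonal_succ, h_zero_left, h_zero_right]
  | succ m =>
    rw [sum_antidiagonal_succ, sum_antidiagonal_succ', sum_antidiagonal_succ (n := m),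
      sum_antidiagonal_succ' (n := m)]
    simp only [h_zero_left, h_zero_right, h_succ, sum_add_distrib]
    abel

end Finset.Nat

section CommRing

variable {R : Type*} [CommRing R] (x : R)

def qPochSq (a n : ℕ) : R :=
  ∏ j ∈ range n, (1 - x ^ (a + 2 * j))

/-- `qBinomSq x i j` is the Gaussian binomial coefficient `[i+j choose i]` in base `x²`. -/
def qBinomSq : ℕ → ℕ → R
  | 0, _ => 1
  | _ + 1, 0 => 1
  | i + 1, j + 1 => qBinomSq (i + 1) j + x ^ (2 * (j + 1)) * qBinomSq i (j + 1)

@[simp]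
theorem qPochSq_zero (a : ℕ) : qPochSq x a 0 = 1 := by
  simp [qPochSq]

theorem qPochSq_succ (a n : ℕ) : qPochSq x a (n + 1) = qPochSq x a n * (1 - x ^ (a + 2 * n)) :=
  prod_range_succ _ n

theorem qPochSq_add (a m k : ℕ) :
    qPochSq x a (m + k) = qPochSq x a m * qPochSq x (a + 2 * m) k := by
  simp only [qPochSq, prod_range_add, mul_add, add_assoc]

@[simp]
theorem qBinomSq_zero_left (j : ℕ) : qBinomSq x 0 j = 1 := by
  rw [qBinomSq]

@[simp]
theorem qBinomSq_zero_right (i : ℕ) : qBinomSq x i 0 = 1 := by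
  cases i <;> rw [qBinomSq]

theorem qBinomSq_succ_succ (i j : ℕ) :
    qBinomSq x (i + 1) (j + 1)
      = qBinomSq x (i + 1) j + x ^ (2 * (j + 1)) * qBinomSq x i (j + 1) := by
  rw [qBinomSq]

theorem qBinomSq_mul_qPochSq (i j : ℕ) :
    qBinomSq x i j * (qPochSq x 2 i * qPochSq x 2 j) = qPochSq x 2 (i + j) := by
  induction i generalizing j with
  | zero => simp
  | succ i ihi =>
    induction j with
    | zero => simp
    | succ j ihj =>
      have hi := ihi (j + 1)
      rw [qPochSq_succ x 2 j, show i + (j + 1) = i + j + 1 by ring] at hi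
      rw [qPochSq_succ x 2 i, show i + 1 + j = i + j + 1 by ring] at ihj
      rw [qBinomSq_succ_succ, qPochSq_succ x 2 i, qPochSq_succ x 2 j,
        show i + 1 + (j + 1) = i + j + 1 + 1 by ring, qPochSq_succ x 2 (i + j + 1)]
      linear_combination
        (1 - x ^ (2 + 2 * j)) * ihj + x ^ (2 * (j + 1)) * (1 - x ^ (2 + 2 * i)) * hi

theorem sum_antidiagonal_qBinomSq_mul_qPochSq (n : ℕ) :
    ∑ p ∈ antidiagonal n, qBinomSq x p.1 p.2 * x ^ p.1 * qPochSq x 1 p.1 * qPochSq x 1 p.2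
      = qPochSq x 2 n := by
  induction n with
  | zero => simp
  | succ n ih =>
    rw [Nat.sum_antidiagonal_succ_of_pascal
      (h := fun i j ↦ qBinomSq x i j * x ^ i * qPochSq x 1 i * qPochSq x 1 j)
      (f := fun i j ↦ qBinomSq x i j * x ^ i * qPochSq x 1 i * qPochSq x 1 (j + 1))
      (g := fun i j ↦
        x ^ (2 * j) * qBinomSq x i j * x ^ (i + 1) * qPochSq x 1 (i + 1) * qPochSq x 1 j)
      (fun j ↦ by simp) (fun i ↦ by simp) (fun i j ↦ by rw [qBinomSq_succ_succ]; ring),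
      ← sum_add_distrib, qPochSq_succ, ← ih, sum_mul]
    refine sum_congr rfl fun p hp ↦ ?_
    rw [← mem_antidiagonal.mp hp, qPochSq_succ, qPochSq_succ x 1 p.1]
    ring

end CommRing

theorem P2_eq_qPochSq (a n : ℕ) : P2 a n = qPochSq X a n := rfl

theorem constantCoeff_P2 {a : ℕ} (ha : 0 < a) (n : ℕ) : constantCoeff (P2 a n) = 1 := by
  simp only [P2, map_prod, map_sub, map_one, map_pow, constantCoeff_X]
  exact prod_eq_one fun j _ ↦ by rw [zero_pow (by omega), sub_zero]

theorem P2_two_eq_qBinomSq_mul {i n : ℕ} (h : i ≤ n) :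
    P2 2 n = qBinomSq X i (n - i) * (P2 2 i * P2 2 (n - i)) := by
  simpa only [P2_eq_qPochSq, Nat.add_sub_cancel' h] using (qBinomSq_mul_qPochSq X i (n - i)).symm

theorem P2_one_sq {i n : ℕ} (h : i ≤ n) :
    P2 1 n ^ 2 = P2 1 i * P2 1 (n - i) * (P2 (2 * i + 1) (n - i) * P2 (2 * (n - i) + 1) i) := by
  have hleft : P2 1 n = P2 1 i * P2 (2 * i + 1) (n - i) := by
    simpa only [P2_eq_qPochSq, Nat.add_sub_cancel' h, add_comm 1]
      using qPochSq_add X 1 i (n - i)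
  have hright : P2 1 n = P2 1 (n - i) * P2 (2 * (n - i) + 1) i := by
    simpa only [P2_eq_qPochSq, Nat.sub_add_cancel h, add_comm 1]
      using qPochSq_add X 1 (n - i) i
  linear_combination P2 1 n * hleft + P2 1 i * P2 (2 * i + 1) (n - i) * hright

theorem stmt_4_general (n : ℕ) :
    P2 2 n * (P2 1 n ^ 2)⁻¹
      = ∑ i ∈ Finset.range (n + 1),
          P2 2 n * (P2 2 i * P2 2 (n - i))⁻¹ * (PowerSeries.X : PowerSeries ℚ) ^ i *
            (P2 (2 * i + 1) (n - i) * P2 (2 * (n - i) + 1) i)⁻¹ := by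
  have hterm : ∀ i ∈ range (n + 1),
      P2 2 n * (P2 2 i * P2 2 (n - i))⁻¹ * X ^ i *
          (P2 (2 * i + 1) (n - i) * P2 (2 * (n - i) + 1) i)⁻¹
        = qBinomSq X i (n - i) * X ^ i * P2 1 i * P2 1 (n - i) * (P2 1 n ^ 2)⁻¹ := by
    intro i hi
    have hle : i ≤ n := Nat.lt_succ_iff.mp (mem_range.mp hi)
    set E := P2 2 i * P2 2 (n - i)
    set D := P2 (2 * i + 1) (n - i) * P2 (2 * (n - i) + 1) i
    have hE : E * E⁻¹ = 1 := PowerSeries.mul_inv_cancel _ (by simp [E, constantCoeff_P2])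
    have hD : D * D⁻¹ = 1 := PowerSeries.mul_inv_cancel _ (by simp [D, constantCoeff_P2])
    rw [eq_mul_inv_iff_mul_eq (by simp [constantCoeff_P2]), P2_two_eq_qBinomSq_mul hle,
      P2_one_sq hle]
    set c := qBinomSq X i (n - i) * X ^ i * P2 1 i * P2 1 (n - i)
    linear_combination c * D⁻¹ * D * hE + c * hD
  have key := sum_antidiagonal_qBinomSq_mul_qPochSq (X : ℚ⟦X⟧) n
  rw [Nat.sum_antidiagonal_eq_sum_range_succ
    (fun i j ↦ qBinomSq X i j * X ^ i * qPochSq X 1 i * qPochSq X 1 j)] at key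
  rw [sum_congr rfl hterm, ← sum_mul]
  exact congrArg (· * _) key.symm

/-- For every positive integer `n`,
`(q²;q²)_n / (q;q²)_n²
  = ∑_{i=0}^{n} [n choose i]_{q²} q^i / ((q^{2i+1};q²)_{n-i} (q^{2(n-i)+1};q²)_i)`
as formal power series in `q`, where `[n choose i]_{q²} = (q²;q²)_n/((q²;q²)_i (q²;q²)_{n-i})`. -/
theorem stmt_4 (n : ℕ) (hn : 0 < n) :
    P2 2 n * (P2 1 n ^ 2)⁻¹
      = ∑ i ∈ Finset.range (n + 1),
          P2 2 n * (P2 2 i * P2 2 (n - i))⁻¹ * (PowerSeries.X : PowerSeries ℚ) ^ i *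
            (P2 (2 * i + 1) (n - i) * P2 (2 * (n - i) + 1) i)⁻¹ :=
  stmt_4_general n
end

section
/- For every nonnegative integer n, the formal power series (q²;q²)_n / (q;q²)_{n+1}² has all coefficients strictly positive. -/
open Finset PowerSeries

/-! Write `V(x, y; a, b, c) = (q^(x+y); q²)_c / ((q^x; q²)_a (q^y; q²)_b)`. The partial fraction
identity `(1 - q^(x+y)) / ((1 - q^x)(1 - q^y)) = 1 / (1 - q^x) + q^y / (1 - q^y)` gives
`V(x, y; a+1, b+1, c+1) = V(x, y+2; a+1, b, c) + q^y V(x+2, y; a, b+1, c)`,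
so by induction on `c` the series `V` has nonnegative coefficients whenever `c ≤ a` and `c ≤ b`:
the base case is a product of geometric series. For `y = 1` the second summand is `q` times a
series with positive coefficients, again by induction on `c` (the base case now contains the
factor `1 / (1 - q)`), while the first has constant term `1`. The theorem is the case
`x = y = 1`, `a = b = n + 1`, `c = n`. -/

namespace PowerSeries

section Nonneg

variable (R : Type*) [Semiring R] [PartialOrder R] [IsOrderedRing R]

def nonnegCoeffs : Subsemiring R⟦X⟧ where
  carrier := {f | ∀ n, 0 ≤ coeff n f}
  mul_mem' {f g} hf hg n := by
    rw [coeff_mul]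
    exact sum_nonneg fun p _ => mul_nonneg (hf p.1) (hg p.2)
  one_mem' n := by
    rw [coeff_one]
    split_ifs
    exacts [zero_le_one, le_rfl]
  add_mem' {f g} hf hg n := by
    rw [map_add]
    exact add_nonneg (hf n) (hg n)
  zero_mem' n := by simp

variable {R}

theorem X_mem_nonnegCoeffs : (X : R⟦X⟧) ∈ nonnegCoeffs R := fun n => by
  rw [coeff_X]
  split_ifs
  exacts [zero_le_one, le_rfl]

end Nonneg

section Pos

variable {R : Type*} [Semiring R] [PartialOrder R] [IsStrictOrderedRing R]

theorem coeff_mul_pos {f g : R⟦X⟧} (hf : f ∈ nonnegCoeffs R) (hf0 : 0 < constantCoeff f)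
    (hg : ∀ n, 0 < coeff n g) (n : ℕ) : 0 < coeff n (f * g) := by
  rw [coeff_mul]
  refine sum_pos' (fun p _ => mul_nonneg (hf p.1) (hg p.2).le) ⟨(0, n), by simp, ?_⟩
  exact mul_pos (by rwa [coeff_zero_eq_constantCoeff_apply]) (hg n)

theorem coeff_add_X_mul_pos {f g : R⟦X⟧} (hf : f ∈ nonnegCoeffs R) (hf0 : 0 < constantCoeff f)
    (hg : ∀ n, 0 < coeff n g) : ∀ n, 0 < coeff n (f + X * g)
  | 0 => by simpa using hf0
  | n + 1 => by
    rw [map_add, coeff_succ_X_mul]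
    exact add_pos_of_nonneg_of_pos (hf _) (hg n)

end Pos

section Field

variable {k : Type*} [Field k]

theorem one_sub_mul_mul_inv_mul_inv {φ ψ : k⟦X⟧} (hφ : constantCoeff φ = 0)
    (hψ : constantCoeff ψ = 0) :
    (1 - φ * ψ) * (1 - φ)⁻¹ * (1 - ψ)⁻¹ = (1 - φ)⁻¹ + ψ * (1 - ψ)⁻¹ := by
  have hφ' := PowerSeries.mul_inv_cancel (1 - φ) (by simp [hφ])
  have hψ' := PowerSeries.mul_inv_cancel (1 - ψ) (by simp [hψ])
  linear_combination (ψ * (1 - ψ)⁻¹) * hφ' + (1 - φ)⁻¹ * hψ'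

theorem coeff_inv_one_sub_X (n : ℕ) : coeff n (1 - X : k⟦X⟧)⁻¹ = 1 := by
  rw [(inv_eq_iff_mul_eq_one (by simp)).mpr (mk_one_mul_one_sub_eq_one k), coeff_mk, Pi.one_apply]

variable [LinearOrder k] [IsStrictOrderedRing k]

/-- The coefficients of `(1 - f)⁻¹` satisfy `c₀ = 1`, `cₙ = ∑_{0 < i ≤ n} fᵢ cₙ₋ᵢ`. -/
theorem inv_one_sub_mem_nonnegCoeffs {f : k⟦X⟧} (hf : f ∈ nonnegCoeffs k)
    (hf0 : constantCoeff f = 0) : (1 - f)⁻¹ ∈ nonnegCoeffs k := by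
  intro n
  induction n using Nat.strong_induction_on with
  | _ n ih =>
  have h1 : constantCoeff (1 - f) = 1 := by simp [hf0]
  rw [coeff_inv, h1, inv_one]
  split_ifs with hn
  · exact zero_le_one
  rw [neg_one_mul, neg_nonneg]
  refine sum_nonpos fun p hp => ?_
  split_ifs with hp2
  · have hp1 : p.1 ≠ 0 := by rw [HasAntidiagonal.mem_antidiagonal] at hp; omega
    rw [map_sub, coeff_one, if_neg hp1, zero_sub, neg_mul, neg_nonpos]
    exact mul_nonneg (hf _) (ih _ hp2)
  · rfl

end Field

end PowerSeries

theorem P2_succ (a n : ℕ) : P2 a (n + 1) = (1 - X ^ a) * P2 (a + 2) n := by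
  rw [P2, P2, prod_range_succ', mul_comm, mul_zero, add_zero]
  congr 1
  exact prod_congr rfl fun j _ => by ring

theorem inv_P2_mem_nonnegCoeffs {a : ℕ} (ha : 0 < a) (n : ℕ) : (P2 a n)⁻¹ ∈ nonnegCoeffs ℚ := by
  induction n generalizing a with
  | zero => simp [P2, one_mem]
  | succ n ih =>
    rw [P2_succ, PowerSeries.mul_inv_rev]
    refine mul_mem (ih (by omega)) (inv_one_sub_mem_nonnegCoeffs ?_ (by simp [ha.ne']))
    exact pow_mem X_mem_nonnegCoeffs a

noncomputable def P2Ratio (x y a b c : ℕ) : PowerSeries ℚ :=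
  P2 (x + y) c * (P2 x a)⁻¹ * (P2 y b)⁻¹

theorem constantCoeff_P2Ratio {x y : ℕ} (hx : 0 < x) (hy : 0 < y) (a b c : ℕ) :
    constantCoeff (P2Ratio x y a b c) = 1 := by
  simp [P2Ratio, constantCoeff_P2, hx, hy, add_pos hx hy]

theorem P2Ratio_succ {x y : ℕ} (hx : 0 < x) (hy : 0 < y) (a b c : ℕ) :
    P2Ratio x y (a + 1) (b + 1) (c + 1) =
      P2Ratio x (y + 2) (a + 1) b c + X ^ y * P2Ratio (x + 2) y a (b + 1) c := by
  have key := one_sub_mul_mul_inv_mul_inv (φ := (X : ℚ⟦X⟧) ^ x) (ψ := X ^ y)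
    (by simp [hx.ne']) (by simp [hy.ne'])
  rw [P2Ratio, P2Ratio, P2Ratio, show x + (y + 2) = x + y + 2 by ring,
    show x + 2 + y = x + y + 2 by ring]
  simp only [P2_succ, PowerSeries.mul_inv_rev, pow_add]
  linear_combination (P2 (x + y + 2) c * (P2 (x + 2) a)⁻¹ * (P2 (y + 2) b)⁻¹) * key

theorem P2Ratio_mem_nonnegCoeffs {x y : ℕ} (hx : 0 < x) (hy : 0 < y) {a b c : ℕ} (hca : c ≤ a)
    (hcb : c ≤ b) : P2Ratio x y a b c ∈ nonnegCoeffs ℚ := by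
  induction c generalizing x y a b with
  | zero =>
    rw [P2Ratio, P2, prod_range_zero, one_mul]
    exact mul_mem (inv_P2_mem_nonnegCoeffs hx a) (inv_P2_mem_nonnegCoeffs hy b)
  | succ c ih =>
    obtain ⟨a, rfl⟩ : ∃ a', a = a' + 1 := ⟨a - 1, by omega⟩
    obtain ⟨b, rfl⟩ : ∃ b', b = b' + 1 := ⟨b - 1, by omega⟩
    rw [P2Ratio_succ hx hy]
    exact add_mem (ih hx (by omega) (by omega) (by omega))
      (mul_mem (pow_mem X_mem_nonnegCoeffs y) (ih (by omega) hy (by omega) (by omega)))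

theorem coeff_P2Ratio_pos {x : ℕ} (hx : 0 < x) {a b c : ℕ} (hca : c ≤ a) (hcb : c < b) :
    ∀ n, 0 < coeff n (P2Ratio x 1 a b c) := by
  induction c generalizing x a b with
  | zero =>
    obtain ⟨b, rfl⟩ : ∃ b', b = b' + 1 := ⟨b - 1, by omega⟩
    rw [P2Ratio, P2, prod_range_zero, one_mul, P2_succ, PowerSeries.mul_inv_rev, pow_one,
      ← mul_assoc]
    refine coeff_mul_pos (mul_mem (inv_P2_mem_nonnegCoeffs hx a)
      (inv_P2_mem_nonnegCoeffs (by omega) b)) ?_ (fun n => by simp [coeff_inv_one_sub_X])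
    simp [constantCoeff_P2, hx]
  | succ c ih =>
    obtain ⟨a, rfl⟩ : ∃ a', a = a' + 1 := ⟨a - 1, by omega⟩
    obtain ⟨b, rfl⟩ : ∃ b', b = b' + 1 := ⟨b - 1, by omega⟩
    rw [P2Ratio_succ hx one_pos, pow_one]
    refine coeff_add_X_mul_pos (P2Ratio_mem_nonnegCoeffs hx (by omega) (by omega) (by omega))
      ?_ (ih (by omega) (by omega) (by omega))
    rw [constantCoeff_P2Ratio hx (by omega)]
    exact one_pos

/-- For every nonnegative integer `n`, the formal power series
`(q²;q²)_n / (q;q²)_{n+1}²` has all coefficients strictly positive. -/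
theorem stmt_5 (n : ℕ) :
    ∀ m : ℕ, 0 < PowerSeries.coeff m (P2 2 n * (P2 1 (n + 1) ^ 2)⁻¹) := by
  have h : P2 2 n * (P2 1 (n + 1) ^ 2)⁻¹ = P2Ratio 1 1 (n + 1) (n + 1) n := by
    rw [P2Ratio, sq, PowerSeries.mul_inv_rev, mul_assoc]
  rw [h]
  exact coeff_P2Ratio_pos one_pos (by omega) (by omega)
end

section
/- Heine's first transformation: ₂φ₁(a,b;c;q,z) = (b;q)_∞ (az;q)_∞ / ((c;q)_∞ (z;q)_∞) · ₂φ₁(c/b, z; az; q, b), i.e. ∑_{n≥0} (a;q)_n (b;q)_n z^n / ((q;q)_n (c;q)_n) = (b;q)_∞ (az;q)_∞ / ((c;q)_∞ (z;q)_∞) · ∑_{n≥0} (c/b;q)_n (z;q)_n b^n / ((q;q)_n (az;q)_n), as formal power series (or for |q|,|z|,|b| < 1). -/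
/-!
Write `(b;q)_n / (c;q)_n = (b;q)_∞ (cq^n;q)_∞ / ((c;q)_∞ (bq^n;q)_∞)` and expand the last quotient
by the q-binomial theorem `∑ (a;q)_m / (q;q)_m t^m = (at;q)_∞ / (t;q)_∞` with `a = c/b`, `t = bq^n`.
Interchanging the two absolutely convergent sums, the inner sum over `n` is again a q-binomial
series, now at `t = zq^m`, and `(azq^m;q)_∞ / (zq^m;q)_∞ = (az;q)_∞ (z;q)_m / ((z;q)_∞ (az;q)_m)`.
The q-binomial theorem itself comes from the functional equation `(1 - t) φ(t) = (1 - at) φ(qt)`,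
iterated `N` times, `(t;q)_N φ(t) = (at;q)_N φ(tq^N)`, and the limit `φ(tq^N) → φ(0) = 1`.
-/

open Finset Filter Topology

noncomputable def qPoch (a q : ℂ) (n : ℕ) : ℂ := ∏ k ∈ range n, (1 - a * q ^ k)

noncomputable def qPochInf (a q : ℂ) : ℂ := ∏' k : ℕ, (1 - a * q ^ k)

/-- `₁φ₀(a; -; q, t)`. -/
noncomputable def qBinomialSeries (a q t : ℂ) : ℂ := ∑' n, qPoch a q n / qPoch q q n * t ^ n

variable {a q : ℂ}

@[simp]
lemma qPoch_zero (a q : ℂ) : qPoch a q 0 = 1 := prod_range_zero _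

lemma qPoch_succ (a q : ℂ) (n : ℕ) : qPoch a q (n + 1) = qPoch a q n * (1 - a * q ^ n) :=
  prod_range_succ _ n

lemma norm_mul_pow_le (hq : ‖q‖ ≤ 1) (a : ℂ) (n : ℕ) : ‖a * q ^ n‖ ≤ ‖a‖ := by
  rw [norm_mul, norm_pow]
  exact mul_le_of_le_one_right (norm_nonneg a) (pow_le_one₀ (norm_nonneg q) hq)

lemma norm_mul_pow_lt_one (hq : ‖q‖ ≤ 1) (ha : ‖a‖ < 1) (n : ℕ) : ‖a * q ^ n‖ < 1 :=
  (norm_mul_pow_le hq a n).trans_lt ha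

lemma one_sub_mul_pow_ne_zero (hq : ‖q‖ ≤ 1) (ha : ‖a‖ < 1) (n : ℕ) : 1 - a * q ^ n ≠ 0 :=
  sub_ne_zero.2 fun h => by simpa [← h] using norm_mul_pow_lt_one hq ha n

lemma qPoch_ne_zero_of_norm_lt_one (hq : ‖q‖ ≤ 1) (ha : ‖a‖ < 1) (n : ℕ) : qPoch a q n ≠ 0 :=
  prod_ne_zero_iff.2 fun k _ => one_sub_mul_pow_ne_zero hq ha k

lemma summable_norm_mul_pow (hq : ‖q‖ < 1) (a : ℂ) : Summable fun k : ℕ => ‖a * q ^ k‖ := by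
  simpa only [norm_mul, norm_pow] using
    (summable_geometric_of_lt_one (norm_nonneg q) hq).mul_left ‖a‖

lemma multipliable_one_sub_mul_pow (hq : ‖q‖ < 1) (a : ℂ) :
    Multipliable fun k : ℕ => 1 - a * q ^ k := by
  simpa only [sub_eq_add_neg] using
    multipliable_one_add_of_summable (f := fun k : ℕ => -(a * q ^ k))
      (by simpa only [norm_neg] using summable_norm_mul_pow hq a)

lemma tendsto_qPoch (hq : ‖q‖ < 1) (a : ℂ) :
    Tendsto (qPoch a q) atTop (𝓝 (qPochInf a q)) :=
  (multipliable_one_sub_mul_pow hq a).hasProd.tendsto_prod_nat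

lemma qPoch_mul_qPochInf (hq : ‖q‖ < 1) (a : ℂ) (n : ℕ) :
    qPoch a q n * qPochInf (a * q ^ n) q = qPochInf a q := by
  have hshift : (fun k : ℕ => 1 - a * q ^ n * q ^ k) = fun k => 1 - a * q ^ (k + n) :=
    funext fun k => by ring
  have h := multipliable_one_sub_mul_pow hq (a * q ^ n)
  rw [hshift] at h
  rw [qPoch, qPochInf, qPochInf, hshift]
  exact Multipliable.prod_mul_tprod_nat_mul' (f := fun k => 1 - a * q ^ k) h

lemma qPoch_ne_zero_of_qPochInf_ne_zero (hq : ‖q‖ < 1) (ha : qPochInf a q ≠ 0) (n : ℕ) :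
    qPoch a q n ≠ 0 :=
  left_ne_zero_of_mul (qPoch_mul_qPochInf hq a n ▸ ha)

lemma qPochInf_ne_zero_of_norm_lt_one (hq : ‖q‖ < 1) (ha : ‖a‖ < 1) : qPochInf a q ≠ 0 := by
  simpa only [qPochInf, sub_eq_add_neg] using
    tprod_one_add_ne_zero_of_summable (f := fun k : ℕ => -(a * q ^ k))
      (fun k => by simpa only [← sub_eq_add_neg] using one_sub_mul_pow_ne_zero hq.le ha k)
      (by simpa only [norm_neg] using summable_norm_mul_pow hq a)

lemma qPochInf_shift_div_qPochInf_shift (hq : ‖q‖ < 1) {b : ℂ} {n : ℕ}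
    (ha : qPoch a q n ≠ 0) (hb : qPoch b q n ≠ 0) :
    qPochInf (a * q ^ n) q / qPochInf (b * q ^ n) q =
      qPochInf a q / qPochInf b q * (qPoch b q n / qPoch a q n) := by
  rw [← qPoch_mul_qPochInf hq a n, ← qPoch_mul_qPochInf hq b n]
  field_simp

lemma exists_norm_qPoch_div_qPoch_le (hq : ‖q‖ < 1) (a : ℂ) :
    ∃ C, ∀ n, ‖qPoch a q n / qPoch q q n‖ ≤ C := by
  have h := (tendsto_qPoch hq a).div (tendsto_qPoch hq q) (qPochInf_ne_zero_of_norm_lt_one hq hq)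
  obtain ⟨C, hC⟩ := isBounded_iff_forall_norm_le.1 (Metric.isBounded_range_of_tendsto _ h)
  exact ⟨C, fun n => hC _ (Set.mem_range_self n)⟩

lemma summable_mul_pow_of_norm_le {c : ℕ → ℂ} {C : ℝ} (hc : ∀ n, ‖c n‖ ≤ C) {t : ℂ}
    (ht : ‖t‖ < 1) : Summable fun n => c n * t ^ n :=
  .of_norm_bounded ((summable_geometric_of_lt_one (norm_nonneg t) ht).mul_left C) fun n => by
    rw [norm_mul, norm_pow]
    exact mul_le_mul_of_nonneg_right (hc n) (by positivity)

lemma qPoch_div_qPoch_succ_mul (hq : ‖q‖ < 1) (a : ℂ) (n : ℕ) :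
    qPoch a q (n + 1) / qPoch q q (n + 1) * (1 - q ^ (n + 1)) =
      qPoch a q n / qPoch q q n * (1 - a * q ^ n) := by
  have h₁ := qPoch_ne_zero_of_norm_lt_one hq.le hq n
  have h₂ : 1 - q ^ (n + 1) ≠ 0 := by
    simpa only [← pow_succ'] using one_sub_mul_pow_ne_zero hq.le hq n
  rw [qPoch_succ, qPoch_succ, ← pow_succ']
  field_simp

lemma hasSum_qBinomialSeries (hq : ‖q‖ < 1) (a : ℂ) {t : ℂ} (ht : ‖t‖ < 1) :
    HasSum (fun n => qPoch a q n / qPoch q q n * t ^ n) (qBinomialSeries a q t) :=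
  let ⟨_, hC⟩ := exists_norm_qPoch_div_qPoch_le hq a
  (summable_mul_pow_of_norm_le hC ht).hasSum

lemma one_sub_mul_qBinomialSeries (hq : ‖q‖ < 1) (a : ℂ) {t : ℂ} (ht : ‖t‖ < 1) :
    (1 - t) * qBinomialSeries a q t = (1 - a * t) * qBinomialSeries a q (q * t) := by
  have hqt : ‖q * t‖ < 1 := by simpa only [mul_comm q, pow_one] using norm_mul_pow_lt_one hq.le ht 1
  have hS := hasSum_qBinomialSeries hq a ht
  have hSq := hasSum_qBinomialSeries hq a hqt
  have hshift : HasSum (fun n => qPoch a q (n + 1) / qPoch q q (n + 1) * t ^ (n + 1) -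
      qPoch a q (n + 1) / qPoch q q (n + 1) * (q * t) ^ (n + 1))
      (t * (qBinomialSeries a q t - a * qBinomialSeries a q (q * t))) := by
    refine ((hS.sub (hSq.mul_left a)).mul_left t).congr_fun fun n => ?_
    linear_combination t ^ (n + 1) * qPoch_div_qPoch_succ_mul hq a n
  have hdiff := HasSum.zero_add (f := fun n => qPoch a q n / qPoch q q n * t ^ n -
    qPoch a q n / qPoch q q n * (q * t) ^ n) hshift
  simp only [pow_zero, mul_one, sub_self, zero_add] at hdiff
  linear_combination (hS.sub hSq).unique hdiff

lemma qPoch_mul_qBinomialSeries (hq : ‖q‖ < 1) (a : ℂ) {t : ℂ} (ht : ‖t‖ < 1) (N : ℕ) :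
    qPoch t q N * qBinomialSeries a q t =
      qPoch (a * t) q N * qBinomialSeries a q (t * q ^ N) := by
  induction N with
  | zero => simp
  | succ N ih =>
    have hstep := one_sub_mul_qBinomialSeries hq a (norm_mul_pow_lt_one hq.le ht N)
    rw [show q * (t * q ^ N) = t * q ^ (N + 1) by ring] at hstep
    rw [qPoch_succ, qPoch_succ]
    linear_combination (1 - t * q ^ N) * ih + qPoch (a * t) q N * hstep

lemma tendsto_qBinomialSeries_mul_pow (hq : ‖q‖ < 1) (a : ℂ) {t : ℂ} (ht : ‖t‖ < 1) :
    Tendsto (fun N => qBinomialSeries a q (t * q ^ N)) atTop (𝓝 1) := by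
  obtain ⟨C, hC⟩ := exists_norm_qPoch_div_qPoch_le hq a
  have hterm (n : ℕ) : Tendsto (fun N => qPoch a q n / qPoch q q n * (t * q ^ N) ^ n) atTop
      (𝓝 (qPoch a q n / qPoch q q n * 0 ^ n)) := by
    simpa only [mul_zero] using
      (((tendsto_pow_atTop_nhds_zero_of_norm_lt_one hq).const_mul t).pow n).const_mul _
  have hbound (N n : ℕ) : ‖qPoch a q n / qPoch q q n * (t * q ^ N) ^ n‖ ≤ C * ‖t‖ ^ n := by
    rw [norm_mul, norm_pow]
    exact mul_le_mul (hC n) (pow_le_pow_left₀ (norm_nonneg _) (norm_mul_pow_le hq.le t N) n)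
      (by positivity) ((norm_nonneg _).trans (hC n))
  have hlim := tendsto_tsum_of_dominated_convergence
    ((summable_geometric_of_lt_one (norm_nonneg t) ht).mul_left C) hterm
    (Eventually.of_forall hbound)
  rw [tsum_eq_single 0 fun n hn => by simp [hn], pow_zero, mul_one, qPoch_zero, qPoch_zero,
    div_one] at hlim
  exact hlim

lemma qPochInf_mul_qBinomialSeries (hq : ‖q‖ < 1) (a : ℂ) {t : ℂ} (ht : ‖t‖ < 1) :
    qPochInf t q * qBinomialSeries a q t = qPochInf (a * t) q := by
  have hleft := (tendsto_qPoch hq t).mul_const (qBinomialSeries a q t)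
  have hright := (tendsto_qPoch hq (a * t)).mul (tendsto_qBinomialSeries_mul_pow hq a ht)
  rw [mul_one] at hright
  exact tendsto_nhds_unique hleft (hright.congr fun N => (qPoch_mul_qBinomialSeries hq a ht N).symm)

theorem qBinomialSeries_eq (hq : ‖q‖ < 1) (a : ℂ) {t : ℂ} (ht : ‖t‖ < 1) :
    qBinomialSeries a q t = qPochInf (a * t) q / qPochInf t q := by
  rw [← qPochInf_mul_qBinomialSeries hq a ht,
    mul_div_cancel_left₀ _ (qPochInf_ne_zero_of_norm_lt_one hq ht)]

lemma tsum_mul_tsum_comm_of_norm_le {α β : ℕ → ℂ} {A B : ℝ} (hα : ∀ n, ‖α n‖ ≤ A)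
    (hβ : ∀ m, ‖β m‖ ≤ B) {z b : ℂ} (hz : ‖z‖ < 1) (hb : ‖b‖ < 1) (hq : ‖q‖ ≤ 1) :
    ∑' n, α n * z ^ n * ∑' m, β m * (b * q ^ n) ^ m =
      ∑' m, β m * b ^ m * ∑' n, α n * (z * q ^ m) ^ n := by
  let G : ℕ → ℕ → ℂ := fun n m => α n * z ^ n * (β m * b ^ m) * q ^ (n * m)
  have hG : Summable (Function.uncurry G) := by
    have hA : 0 ≤ A := (norm_nonneg _).trans (hα 0)
    have hB : 0 ≤ B := (norm_nonneg _).trans (hβ 0)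
    refine .of_norm_bounded (g := fun p : ℕ × ℕ => A * ‖z‖ ^ p.1 * (B * ‖b‖ ^ p.2))
      (((summable_geometric_of_lt_one (norm_nonneg z) hz).mul_left A).mul_of_nonneg
        ((summable_geometric_of_lt_one (norm_nonneg b) hb).mul_left B)
        (fun _ => by positivity) (fun _ => by positivity)) fun p => ?_
    simp only [Function.uncurry, G, norm_mul, norm_pow]
    have hqnm : ‖q‖ ^ (p.1 * p.2) ≤ 1 := pow_le_one₀ (norm_nonneg q) hq
    refine (mul_le_of_le_one_right (by positivity) hqnm).trans ?_
    gcongr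
    exacts [hα p.1, hβ p.2]
  calc ∑' n, α n * z ^ n * ∑' m, β m * (b * q ^ n) ^ m = ∑' n, ∑' m, G n m := by
        refine tsum_congr fun n => ?_
        rw [← tsum_mul_left]
        exact tsum_congr fun m => by simp only [G]; ring
    _ = ∑' m, ∑' n, G n m := hG.tsum_comm.symm
    _ = ∑' m, β m * b ^ m * ∑' n, α n * (z * q ^ m) ^ n := by
        refine tsum_congr fun m => ?_
        rw [← tsum_mul_left]
        exact tsum_congr fun n => by simp only [G]; ring

theorem heine_transformation {a b c z : ℂ} (hq : ‖q‖ < 1) (hz : ‖z‖ < 1) (hb : ‖b‖ < 1)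
    (hb0 : b ≠ 0) (hc : qPochInf c q ≠ 0) (haz : ∀ n, qPoch (a * z) q n ≠ 0) :
    ∑' n, qPoch a q n * qPoch b q n * z ^ n / (qPoch q q n * qPoch c q n) =
      qPochInf b q * qPochInf (a * z) q / (qPochInf c q * qPochInf z q) *
        ∑' n, qPoch (c / b) q n * qPoch z q n * b ^ n / (qPoch q q n * qPoch (a * z) q n) := by
  obtain ⟨A, hA⟩ := exists_norm_qPoch_div_qPoch_le hq a
  obtain ⟨B, hB⟩ := exists_norm_qPoch_div_qPoch_le hq (c / b)
  have hIb := qPochInf_ne_zero_of_norm_lt_one hq hb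
  have hinner (n : ℕ) : qPoch b q n / qPoch c q n =
      qPochInf b q / qPochInf c q * qBinomialSeries (c / b) q (b * q ^ n) := by
    rw [qBinomialSeries_eq hq _ (norm_mul_pow_lt_one hq.le hb n),
      show c / b * (b * q ^ n) = c * q ^ n by field_simp,
      qPochInf_shift_div_qPochInf_shift hq (qPoch_ne_zero_of_qPochInf_ne_zero hq hc n)
        (qPoch_ne_zero_of_norm_lt_one hq.le hb n)]
    field_simp
  have houter (m : ℕ) : qBinomialSeries a q (z * q ^ m) =
      qPochInf (a * z) q / qPochInf z q * (qPoch z q m / qPoch (a * z) q m) := by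
    rw [qBinomialSeries_eq hq _ (norm_mul_pow_lt_one hq.le hz m), ← mul_assoc,
      qPochInf_shift_div_qPochInf_shift hq (haz m) (qPoch_ne_zero_of_norm_lt_one hq.le hz m)]
  calc _ = qPochInf b q / qPochInf c q * ∑' n, qPoch a q n / qPoch q q n * z ^ n *
          qBinomialSeries (c / b) q (b * q ^ n) := by
        rw [← tsum_mul_left]
        exact tsum_congr fun n => by
          linear_combination (qPoch a q n / qPoch q q n * z ^ n) * hinner n
    _ = qPochInf b q / qPochInf c q * ∑' m, qPoch (c / b) q m / qPoch q q m * b ^ m *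
          qBinomialSeries a q (z * q ^ m) :=
        congrArg _ (tsum_mul_tsum_comm_of_norm_le hA hB hz hb hq.le)
    _ = _ := by
        rw [← tsum_mul_left, ← tsum_mul_left]
        exact tsum_congr fun m => by rw [houter]; ring

lemma qPoch_self (q : ℂ) (n : ℕ) : qPoch q q n = ∏ k ∈ range n, (1 - q ^ (k + 1)) :=
  prod_congr rfl fun k _ => by rw [pow_succ']

theorem stmt_7_general (a b c q z : ℂ) (hq : ‖q‖ < 1) (hz : ‖z‖ < 1) (hb : ‖b‖ < 1)
    (hb0 : b ≠ 0)
    (haz : ∀ n : ℕ, ∏ k ∈ Finset.range n, (1 - a * z * q ^ k) ≠ 0)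
    (hcinf : ∏' k : ℕ, (1 - c * q ^ k) ≠ 0) :
    ∑' n : ℕ, (∏ k ∈ Finset.range n, (1 - a * q ^ k)) *
        (∏ k ∈ Finset.range n, (1 - b * q ^ k)) * z ^ n /
        ((∏ k ∈ Finset.range n, (1 - q ^ (k + 1))) *
          ∏ k ∈ Finset.range n, (1 - c * q ^ k))
      = (∏' k : ℕ, (1 - b * q ^ k)) * (∏' k : ℕ, (1 - a * z * q ^ k)) /
          ((∏' k : ℕ, (1 - c * q ^ k)) * ∏' k : ℕ, (1 - z * q ^ k)) *
        ∑' n : ℕ, (∏ k ∈ Finset.range n, (1 - c / b * q ^ k)) *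
          (∏ k ∈ Finset.range n, (1 - z * q ^ k)) * b ^ n /
          ((∏ k ∈ Finset.range n, (1 - q ^ (k + 1))) *
            ∏ k ∈ Finset.range n, (1 - a * z * q ^ k)) := by
  have h := heine_transformation hq hz hb hb0 hcinf haz
  simp only [qPoch_self] at h
  exact h

/-- Heine's first transformation:
`₂φ₁(a,b;c;q,z) = (b;q)_∞ (az;q)_∞ / ((c;q)_∞ (z;q)_∞) · ₂φ₁(c/b, z; az; q, b)`,
for complex parameters with `|q|, |z|, |b| < 1` and nonvanishing denominators. -/
theorem stmt_7 (a b c q z : ℂ) (hq : ‖q‖ < 1) (hz : ‖z‖ < 1) (hb : ‖b‖ < 1)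
    (hb0 : b ≠ 0)
    (hqq : ∀ n : ℕ, ∏ k ∈ Finset.range n, (1 - q ^ (k + 1)) ≠ 0)
    (hc : ∀ n : ℕ, ∏ k ∈ Finset.range n, (1 - c * q ^ k) ≠ 0)
    (haz : ∀ n : ℕ, ∏ k ∈ Finset.range n, (1 - a * z * q ^ k) ≠ 0)
    (hcinf : ∏' k : ℕ, (1 - c * q ^ k) ≠ 0)
    (hzinf : ∏' k : ℕ, (1 - z * q ^ k) ≠ 0) :
    ∑' n : ℕ, (∏ k ∈ Finset.range n, (1 - a * q ^ k)) *
        (∏ k ∈ Finset.range n, (1 - b * q ^ k)) * z ^ n /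
        ((∏ k ∈ Finset.range n, (1 - q ^ (k + 1))) *
          ∏ k ∈ Finset.range n, (1 - c * q ^ k))
      = (∏' k : ℕ, (1 - b * q ^ k)) * (∏' k : ℕ, (1 - a * z * q ^ k)) /
          ((∏' k : ℕ, (1 - c * q ^ k)) * ∏' k : ℕ, (1 - z * q ^ k)) *
        ∑' n : ℕ, (∏ k ∈ Finset.range n, (1 - c / b * q ^ k)) *
          (∏ k ∈ Finset.range n, (1 - z * q ^ k)) * b ^ n /
          ((∏ k ∈ Finset.range n, (1 - q ^ (k + 1))) *
            ∏ k ∈ Finset.range n, (1 - a * z * q ^ k)) :=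
  stmt_7_general a b c q z hq hz hb hb0 haz hcinf
end
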